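/- arXiv:0905.1270 — 2 statements merged into one kernel-verified Lean document; each statement's English description precedes it below -/
import Mathlib

section
/- (Baillon's ergodic theorem, discrete time) Let C be a nonempty bounded closed convex subset of a real Hilbert space H and let T : C → C satisfy ‖Tx − Ty‖ ≤ ‖x − y‖ for all x, y ∈ C. Then for every z ∈ C the Cesàro averages U_n z = (1/n) Σ_{i=0}^{n−1} T^[i] z converge weakly, as n → ∞, to a fixed point of T (in particular T has a fixed point). -/
/-!
The Cesàro averages `Uₙ z = birkhoffAverage ℝ T id n z` stay in the bounded set `C`, so every
ultrafilter finer than `atTop` has a weak limit `p` of them, and `p ∈ C` since closed convex sets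
are weakly closed. Summing `‖Tⁱ⁺¹z - Tq‖² ≤ ‖Tⁱz - q‖²` over `i < n` gives Baillon's inequality
`2⟪Uₙ z - Tq, q - Tq⟫ ≤ ‖z - Tq‖² / n + ‖q - Tq‖²`, and for `q = p` its limit forces `Tp = p`.
For fixed points `p, q` the distances `‖Tⁿz - p‖`, `‖Tⁿz - q‖` are nonincreasing, so by
polarization `⟪Tⁿz, p - q⟫` converges, hence so do its Cesàro means `⟪Uₙ z, p - q⟫`. Two weak
limits `p, q` therefore satisfy `⟪p, p - q⟫ = ⟪q, p - q⟫`, i.e. `p = q`, and all ultrafilter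
limits agree.
-/

open RealInnerProductSpace Filter Topology Finset Function

section Fejer

variable {E : Type*} [SeminormedAddCommGroup E] {C : Set E} {T : E → E} {z : E}

theorem antitone_norm_iterate_sub (hT : LipschitzOnWith 1 T C) (hTC : Set.MapsTo T C C)
    (hz : z ∈ C) {r : E} (hr : r ∈ C) (hrT : IsFixedPt T r) :
    Antitone fun n => ‖T^[n] z - r‖ :=
  antitone_nat_of_succ_le fun n => by
    have := hT.norm_sub_le (hTC.iterate n hz) hr
    rwa [hrT, NNReal.coe_one, one_mul, ← iterate_succ_apply' T n] at this

theorem exists_tendsto_norm_iterate_sub (hT : LipschitzOnWith 1 T C) (hTC : Set.MapsTo T C C)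
    (hz : z ∈ C) {r : E} (hr : r ∈ C) (hrT : IsFixedPt T r) :
    ∃ a, Tendsto (fun n => ‖T^[n] z - r‖) atTop (𝓝 a) :=
  ⟨_, tendsto_atTop_ciInf (antitone_norm_iterate_sub hT hTC hz hr hrT)
    ⟨0, Set.forall_mem_range.2 fun _ => norm_nonneg _⟩⟩

end Fejer

section InnerProductSpace

variable {H : Type*} [NormedAddCommGroup H] [InnerProductSpace ℝ H]

def TendstoWeakly {ι : Type*} (x : ι → H) (l : Filter ι) (p : H) : Prop :=
  ∀ y, Tendsto (fun i => ⟪x i, y⟫) l (𝓝 ⟪p, y⟫)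

theorem exists_tendstoWeakly_of_eventually_norm_le [CompleteSpace H] {ι : Type*}
    (u : Ultrafilter ι) {x : ι → H} {R : ℝ} (hx : ∀ᶠ i in u, ‖x i‖ ≤ R) :
    ∃ p : H, TendstoWeakly x (u : Filter ι) p := by
  have hbd : ∀ y, ∀ᶠ i in u, |⟪x i, y⟫| ≤ R * ‖y‖ := fun y =>
    hx.mono fun i hi =>
      (abs_real_inner_le_norm _ _).trans (mul_le_mul_of_nonneg_right hi (norm_nonneg y))
  have hlim : ∀ y, ∃ c, Tendsto (fun i => ⟪x i, y⟫) u (𝓝 c) := fun y => by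
    obtain ⟨c, -, hc⟩ := isCompact_Icc.ultrafilter_le_nhds (u.map fun i => ⟪x i, y⟫)
      (le_principal_iff.2 <| (hbd y).mono fun i hi => abs_le.1 hi)
    exact ⟨c, hc⟩
  choose L hL using hlim
  let φ : H →L[ℝ] ℝ := LinearMap.mkContinuous
    { toFun := L
      map_add' := fun y₁ y₂ => tendsto_nhds_unique (hL _) <| by
        simpa only [inner_add_right] using (hL y₁).add (hL y₂)
      map_smul' := fun c y => tendsto_nhds_unique (hL _) <| by
        simpa only [real_inner_smul_right, smul_eq_mul, RingHom.id_apply] using (hL y).const_mul c }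
    R fun y => le_of_tendsto (hL y).norm (by simpa only [Real.norm_eq_abs] using hbd y)
  refine ⟨(InnerProductSpace.toDual ℝ H).symm φ, fun y => ?_⟩
  rw [InnerProductSpace.toDual_symm_apply]
  exact hL y

theorem IsComplete.mem_of_tendstoWeakly {ι : Type*} {l : Filter ι} [l.NeBot] {C : Set H}
    (hCc : IsComplete C) (hCcv : Convex ℝ C) {x : ι → H} (hxC : ∀ᶠ i in l, x i ∈ C) {p : H}
    (hxp : TendstoWeakly x l p) : p ∈ C := by
  obtain ⟨c, hcC, hc⟩ :=
    exists_norm_eq_iInf_of_complete_convex (hxC.exists.elim fun i hi => ⟨x i, hi⟩) hCc hCcv p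
  have hproj := (norm_eq_iInf_iff_real_inner_le_zero hCcv hcC).1 hc
  have hnonpos : ⟪p - c, p - c⟫ ≤ 0 := by
    have hlim := (hxp (p - c)).sub_const ⟪c, p - c⟫
    refine le_of_tendsto (by simpa only [inner_sub_left] using hlim) ?_
    filter_upwards [hxC] with i hi
    rw [← inner_sub_left, real_inner_comm]
    exact hproj _ hi
  rwa [sub_eq_zero.1 (real_inner_self_nonpos.1 hnonpos)]

theorem tendsto_inner_sub_of_tendsto_norm_sub {ι : Type*} {l : Filter ι} {w : ι → H} {p q : H}
    {a b : ℝ} (ha : Tendsto (fun i => ‖w i - p‖) l (𝓝 a))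
    (hb : Tendsto (fun i => ‖w i - q‖) l (𝓝 b)) :
    Tendsto (fun i => ⟪w i, p - q⟫) l (𝓝 ((b ^ 2 - a ^ 2 + ‖p‖ ^ 2 - ‖q‖ ^ 2) / 2)) := by
  have polar : ∀ v : H, ⟪v, p - q⟫ = (‖v - q‖ ^ 2 - ‖v - p‖ ^ 2 + ‖p‖ ^ 2 - ‖q‖ ^ 2) / 2 := by
    intro v
    rw [norm_sub_sq_real, norm_sub_sq_real, inner_sub_right]
    ring
  simp_rw [polar]
  exact ((((hb.pow 2).sub (ha.pow 2)).add_const _).sub_const _).div_const 2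

theorem Convex.birkhoffAverage_mem {C : Set H} (hC : Convex ℝ C) {T : H → H}
    (hTC : Set.MapsTo T C C) {z : H} (hz : z ∈ C) {n : ℕ} (hn : n ≠ 0) :
    birkhoffAverage ℝ T id n z ∈ C := by
  rw [birkhoffAverage, birkhoffSum, smul_sum]
  exact hC.sum_mem (fun _ _ => by positivity) (by simp [hn]) fun i _ => hTC.iterate i hz

section Nonexpansive

variable {C : Set H} {T : H → H} {z : H}

theorem sum_inner_iterate_sub_le (hT : LipschitzOnWith 1 T C) (hTC : Set.MapsTo T C C) (hz : z ∈ C)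
    {q : H} (hq : q ∈ C) (n : ℕ) :
    2 * ∑ i ∈ range n, ⟪T^[i] z - T q, q - T q⟫ ≤ ‖z - T q‖ ^ 2 + n * ‖q - T q‖ ^ 2 := by
  set a : ℕ → ℝ := fun i => ‖T^[i] z - T q‖ ^ 2
  have hstep : ∀ i, a (i + 1) - a i ≤ ‖q - T q‖ ^ 2 - 2 * ⟪T^[i] z - T q, q - T q⟫ := by
    intro i
    have hlip : ‖T^[i + 1] z - T q‖ ≤ ‖T^[i] z - q‖ := by
      rw [iterate_succ_apply']
      simpa using hT.norm_sub_le (hTC.iterate i hz) hq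
    have hexpand : ‖T^[i] z - q‖ ^ 2 = a i - 2 * ⟪T^[i] z - T q, q - T q⟫ + ‖q - T q‖ ^ 2 := by
      rw [← norm_sub_sq_real, sub_sub_sub_cancel_right]
    have := pow_le_pow_left₀ (norm_nonneg _) hlip 2
    simp only [a] at hexpand ⊢
    linarith
  have hsum := sum_le_sum fun i (_ : i ∈ range n) => hstep i
  rw [sum_range_sub, sum_sub_distrib, sum_const, card_range, nsmul_eq_mul,
    ← mul_sum] at hsum
  have : 0 ≤ a n := sq_nonneg _
  simp only [a, iterate_zero_apply] at hsum this
  linarith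

theorem two_mul_inner_birkhoffAverage_sub_le (hT : LipschitzOnWith 1 T C) (hTC : Set.MapsTo T C C)
    (hz : z ∈ C) {q : H} (hq : q ∈ C) {n : ℕ} (hn : n ≠ 0) :
    2 * ⟪birkhoffAverage ℝ T id n z - T q, q - T q⟫ ≤ ‖z - T q‖ ^ 2 / n + ‖q - T q‖ ^ 2 := by
  have hn' : (n : ℝ) ≠ 0 := Nat.cast_ne_zero.2 hn
  calc 2 * ⟪birkhoffAverage ℝ T id n z - T q, q - T q⟫
      = (n : ℝ)⁻¹ * (2 * ∑ i ∈ range n, ⟪T^[i] z - T q, q - T q⟫) := by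
        simp only [birkhoffAverage, birkhoffSum, id, inner_sub_left, real_inner_smul_left,
          sum_inner, sum_sub_distrib, sum_const, card_range, nsmul_eq_mul]
        field_simp
    _ ≤ (n : ℝ)⁻¹ * (‖z - T q‖ ^ 2 + n * ‖q - T q‖ ^ 2) := by
        gcongr
        exact sum_inner_iterate_sub_le hT hTC hz hq n
    _ = ‖z - T q‖ ^ 2 / n + ‖q - T q‖ ^ 2 := by field_simp

theorem isFixedPt_of_tendstoWeakly_birkhoffAverage (hT : LipschitzOnWith 1 T C)
    (hTC : Set.MapsTo T C C) (hz : z ∈ C) {l : Filter ℕ} [l.NeBot] (hl : l ≤ atTop) {p : H}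
    (hpC : p ∈ C) (hp : TendstoWeakly (fun n => birkhoffAverage ℝ T id n z) l p) :
    IsFixedPt T p := by
  have hlhs : Tendsto (fun n => 2 * ⟪birkhoffAverage ℝ T id n z - T p, p - T p⟫) l
      (𝓝 (2 * ‖p - T p‖ ^ 2)) := by
    rw [← real_inner_self_eq_norm_sq]
    simpa only [inner_sub_left] using ((hp (p - T p)).sub_const ⟪T p, p - T p⟫).const_mul 2
  have hrhs : Tendsto (fun n : ℕ => ‖z - T p‖ ^ 2 / n + ‖p - T p‖ ^ 2) l
      (𝓝 (0 + ‖p - T p‖ ^ 2)) :=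
    ((tendsto_const_div_atTop_nhds_zero_nat _).mono_left hl).add_const _
  have hle := le_of_tendsto_of_tendsto hlhs hrhs <| ((eventually_ne_atTop 0).filter_mono hl).mono
    fun n hn => two_mul_inner_birkhoffAverage_sub_le hT hTC hz hpC hn
  have : ‖p - T p‖ = 0 := by nlinarith [norm_nonneg (p - T p)]
  exact (sub_eq_zero.1 (norm_eq_zero.1 this)).symm

theorem eq_of_tendstoWeakly_birkhoffAverage (hT : LipschitzOnWith 1 T C) (hTC : Set.MapsTo T C C)
    (hz : z ∈ C) {u v : Filter ℕ} [u.NeBot] [v.NeBot] (hu : u ≤ atTop) (hv : v ≤ atTop)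
    {p q : H} (hpC : p ∈ C) (hqC : q ∈ C) (hpT : IsFixedPt T p) (hqT : IsFixedPt T q)
    (hp : TendstoWeakly (fun n => birkhoffAverage ℝ T id n z) u p)
    (hq : TendstoWeakly (fun n => birkhoffAverage ℝ T id n z) v q) : p = q := by
  obtain ⟨a, ha⟩ := exists_tendsto_norm_iterate_sub hT hTC hz hpC hpT
  obtain ⟨b, hb⟩ := exists_tendsto_norm_iterate_sub hT hTC hz hqC hqT
  have hces := (tendsto_inner_sub_of_tendsto_norm_sub ha hb).cesaro
  simp only [← real_inner_smul_left, ← sum_inner] at hces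
  have hpL := tendsto_nhds_unique (hp (p - q)) (hces.mono_left hu)
  have hqL := tendsto_nhds_unique (hq (p - q)) (hces.mono_left hv)
  have : ⟪p - q, p - q⟫ = 0 := by rw [inner_sub_left, hpL, hqL, sub_self]
  exact sub_eq_zero.1 (real_inner_self_nonpos.1 this.le)

theorem exists_isFixedPt_tendstoWeakly_birkhoffAverage [CompleteSpace H]
    (hCb : Bornology.IsBounded C) (hCcl : IsClosed C) (hCcv : Convex ℝ C)
    (hT : LipschitzOnWith 1 T C) (hTC : Set.MapsTo T C C) (hz : z ∈ C) (u : Ultrafilter ℕ)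
    (hu : (u : Filter ℕ) ≤ atTop) :
    ∃ p ∈ C, IsFixedPt T p ∧
      TendstoWeakly (fun n => birkhoffAverage ℝ T id n z) (u : Filter ℕ) p := by
  have hmem : ∀ᶠ n in (u : Filter ℕ), birkhoffAverage ℝ T id n z ∈ C :=
    ((eventually_ne_atTop 0).filter_mono hu).mono fun n hn => hCcv.birkhoffAverage_mem hTC hz hn
  obtain ⟨R, hR⟩ := hCb.exists_norm_le
  obtain ⟨p, hp⟩ := exists_tendstoWeakly_of_eventually_norm_le u (hmem.mono fun n hn => hR _ hn)
  have hpC := hCcl.isComplete.mem_of_tendstoWeakly hCcv hmem hp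
  exact ⟨p, hpC, isFixedPt_of_tendstoWeakly_birkhoffAverage hT hTC hz hu hpC hp, hp⟩

end Nonexpansive

end InnerProductSpace

theorem stmt17_general {H : Type*} [NormedAddCommGroup H] [InnerProductSpace ℝ H] [CompleteSpace H]
    (C : Set H) (hCb : Bornology.IsBounded C)
    (hCcl : IsClosed C) (hCcv : Convex ℝ C)
    (T : H → H) (hTC : Set.MapsTo T C C)
    (hT : ∀ x ∈ C, ∀ y ∈ C, ‖T x - T y‖ ≤ ‖x - y‖) :
    ∀ z ∈ C, ∃ p ∈ C, T p = p ∧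
      ∀ y : H,
        Tendsto (fun n : ℕ => ⟪(n : ℝ)⁻¹ • ∑ i ∈ range n, T^[i] z, y⟫) atTop
          (𝓝 ⟪p, y⟫) := by
  intro z hz
  have hT' : LipschitzOnWith 1 T C :=
    lipschitzOnWith_iff_norm_sub_le.2 fun x hx y hy => by simpa using hT x hx y hy
  obtain ⟨p, hpC, hpT, hp⟩ := exists_isFixedPt_tendstoWeakly_birkhoffAverage hCb hCcl hCcv hT'
    hTC hz (Ultrafilter.of atTop) (Ultrafilter.of_le _)
  refine ⟨p, hpC, hpT, fun y => (tendsto_iff_ultrafilter _ _ _).2 fun v hv => ?_⟩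
  obtain ⟨q, hqC, hqT, hq⟩ :=
    exists_isFixedPt_tendstoWeakly_birkhoffAverage hCb hCcl hCcv hT' hTC hz v hv
  rw [eq_of_tendstoWeakly_birkhoffAverage hT' hTC hz (Ultrafilter.of_le _) hv hpC hqC hpT hqT hp hq]
  exact hq y

/-- Baillon's ergodic theorem: if `C` is a nonempty bounded closed convex
subset of a real Hilbert space and `T : C → C` is nonexpansive, then for every `z ∈ C` the
Cesàro averages `(1/n) Σ_{i<n} Tⁱ z` converge weakly to a fixed point of `T`. -/
theorem stmt17 {H : Type*} [NormedAddCommGroup H] [InnerProductSpace ℝ H] [CompleteSpace H]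
    (C : Set H) (hCne : C.Nonempty) (hCb : Bornology.IsBounded C)
    (hCcl : IsClosed C) (hCcv : Convex ℝ C)
    (T : H → H) (hTC : Set.MapsTo T C C)
    (hT : ∀ x ∈ C, ∀ y ∈ C, ‖T x - T y‖ ≤ ‖x - y‖) :
    ∀ z ∈ C, ∃ p ∈ C, T p = p ∧
      ∀ y : H,
        Tendsto (fun n : ℕ => ⟪(n : ℝ)⁻¹ • ∑ i ∈ range n, T^[i] z, y⟫) atTop
          (𝓝 ⟪p, y⟫) :=
  stmt17_general C hCb hCcl hCcv T hTC hT
end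

section
/- Let A be a maximal monotone operator on a real Hilbert space H that is α-strongly monotone for some α > 0, i.e., ⟨x* − y*, x − y⟩ ≥ α‖x − y‖² for all (x, x*), (y, y*) ∈ A, and let p ∈ H satisfy (p, 0) ∈ A (the solution set is the singleton {p}). If u : [0, ∞) → H is a solution of the differential inclusion u̇ ∈ −Au, then ‖u(t) − p‖² ≤ e^{−2αt} ‖u(0) − p‖² for all t ≥ 0; in particular u(t) converges strongly to p as t → ∞. -/
/-!
The energy `e^{2αt} ‖u t - p‖²` is absolutely continuous on bounded intervals, being built from
Lipschitz pieces. Strong monotonicity applied to the pairs `(u t, -u' t)` and `(p, 0)` gives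
`α ‖u t - p‖² ≤ -⟪u' t, u t - p⟫`, so its derivative is nonpositive almost everywhere, and the
fundamental theorem of calculus for absolutely continuous functions shows it is nonincreasing.
-/

open RealInnerProductSpace Filter Topology MeasureTheory Set

/-- An operator (identified with its graph) is monotone. -/
def MonotoneOp {H : Type*} [NormedAddCommGroup H] [InnerProductSpace ℝ H]
    (A : Set (H × H)) : Prop :=
  ∀ p ∈ A, ∀ q ∈ A, (0:ℝ) ≤ ⟪p.2 - q.2, p.1 - q.1⟫

/-- An operator is maximal monotone: monotone and with no proper monotone extension. -/
def MaximalMonotone {H : Type*} [NormedAddCommGroup H] [InnerProductSpace ℝ H]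
    (A : Set (H × H)) : Prop :=
  MonotoneOp A ∧ ∀ B : Set (H × H), MonotoneOp B → A ⊆ B → B = A

theorem AbsolutelyContinuousOnInterval.le_of_ae_deriv_nonpos {f : ℝ → ℝ} {a b : ℝ}
    (hf : AbsolutelyContinuousOnInterval f a b) (hab : a ≤ b)
    (hf' : ∀ᵐ x, x ∈ Ioo a b → deriv f x ≤ 0) : f b ≤ f a := by
  rw [← sub_nonpos, ← hf.integral_deriv_eq_sub, ← neg_nonneg, ← intervalIntegral.integral_neg]
  refine intervalIntegral.integral_nonneg_of_ae_restrict hab ?_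
  rw [EventuallyLE, Measure.restrict_congr_set Ioo_ae_eq_Icc.symm,
    ae_restrict_iff' measurableSet_Ioo]
  filter_upwards [hf'] with x hx hxI using neg_nonneg.mpr (hx hxI)

theorem LocallyLipschitzOn.absolutelyContinuousOnInterval_norm_sub_sq {E : Type*}
    [SeminormedAddCommGroup E] {u : ℝ → E} {s : Set ℝ} {a b : ℝ}
    (hu : LocallyLipschitzOn s u) (hab : uIcc a b ⊆ s) (p : E) :
    AbsolutelyContinuousOnInterval (fun t ↦ ‖u t - p‖ ^ 2) a b := by
  obtain ⟨K, hK⟩ := (hu.mono hab).exists_lipschitzOnWith_of_compact isCompact_uIcc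
  have hdist : AbsolutelyContinuousOnInterval (fun t ↦ dist (u t) p) a b :=
    ((LipschitzWith.dist_left p).comp_lipschitzOnWith hK).absolutelyContinuousOnInterval
  simpa only [sq, dist_eq_norm] using hdist.fun_mul hdist

def StronglyMonotoneOp {H : Type*} [NormedAddCommGroup H] [InnerProductSpace ℝ H]
    (α : ℝ) (A : Set (H × H)) : Prop :=
  ∀ p ∈ A, ∀ q ∈ A, α * ‖p.1 - q.1‖ ^ 2 ≤ ⟪p.2 - q.2, p.1 - q.1⟫

section StronglyMonotone

variable {H : Type*} [NormedAddCommGroup H] [InnerProductSpace ℝ H] {A : Set (H × H)} {α : ℝ}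
  {p : H}

theorem StronglyMonotoneOp.deriv_exp_mul_norm_sub_sq_nonpos (hA : StronglyMonotoneOp α A)
    (hp : (p, 0) ∈ A) {u : ℝ → H} {d : H} {t : ℝ} (hd : HasDerivAt u d t)
    (hut : (u t, -d) ∈ A) :
    deriv (fun s ↦ Real.exp (2 * α * s) * ‖u s - p‖ ^ 2) t ≤ 0 := by
  have hexp : HasDerivAt (fun s ↦ Real.exp (2 * α * s)) (Real.exp (2 * α * t) * (2 * α)) t := by
    simpa using ((hasDerivAt_id t).const_mul (2 * α)).exp
  rw [(hexp.fun_mul (hd.sub_const p).norm_sq).deriv]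
  have hmono := hA _ hut _ hp
  rw [sub_zero, inner_neg_left, real_inner_comm] at hmono
  nlinarith [mul_le_mul_of_nonneg_left hmono (Real.exp_pos (2 * α * t)).le]

theorem StronglyMonotoneOp.antitoneOn_exp_mul_norm_sub_sq (hA : StronglyMonotoneOp α A)
    (hp : (p, 0) ∈ A) {u : ℝ → H} (hulip : LocallyLipschitzOn (Ici 0) u)
    (hu : ∀ᵐ t ∂(volume.restrict (Ioi (0:ℝ))), ∃ d : H, HasDerivAt u d t ∧ (u t, -d) ∈ A) :
    AntitoneOn (fun t ↦ Real.exp (2 * α * t) * ‖u t - p‖ ^ 2) (Ici 0) := by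
  intro s hs t ht hst
  have hsub : uIcc s t ⊆ Ici 0 := by
    rw [uIcc_of_le hst]
    exact Icc_subset_Ici_iff hst |>.mpr hs
  refine AbsolutelyContinuousOnInterval.le_of_ae_deriv_nonpos
    (f := fun t ↦ Real.exp (2 * α * t) * ‖u t - p‖ ^ 2) ?_ hst ?_
  · have hexp : ContDiff ℝ 1 fun t ↦ Real.exp (2 * α * t) := by fun_prop
    exact hexp.contDiffOn.absolutelyContinuousOnInterval.fun_mul
      (hulip.absolutelyContinuousOnInterval_norm_sub_sq hsub p)
  · rw [ae_restrict_iff' measurableSet_Ioi] at hu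
    filter_upwards [hu] with x hx hxI
    obtain ⟨d, hd, hxA⟩ := hx (lt_of_le_of_lt hs hxI.1)
    exact hA.deriv_exp_mul_norm_sub_sq_nonpos hp hd hxA

end StronglyMonotone

theorem stmt19_general {H : Type*} [NormedAddCommGroup H] [InnerProductSpace ℝ H]
    (A : Set (H × H))
    (α : ℝ) (hα : 0 < α)
    (hstrong : ∀ p ∈ A, ∀ q ∈ A, α * ‖p.1 - q.1‖ ^ 2 ≤ ⟪p.2 - q.2, p.1 - q.1⟫)
    (p : H) (hp : (p, 0) ∈ A)
    (u : ℝ → H) (hulip : LocallyLipschitzOn (Ici 0) u)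
    (hu : ∀ᵐ t ∂(volume.restrict (Ioi (0:ℝ))),
      ∃ d : H, HasDerivAt u d t ∧ (u t, -d) ∈ A) :
    (∀ t : ℝ, 0 ≤ t → ‖u t - p‖ ^ 2 ≤ Real.exp (-2 * α * t) * ‖u 0 - p‖ ^ 2) ∧
    Tendsto u atTop (𝓝 p) := by
  have hdecay (t : ℝ) (ht : 0 ≤ t) :
      ‖u t - p‖ ^ 2 ≤ Real.exp (-2 * α * t) * ‖u 0 - p‖ ^ 2 := by
    have hle : Real.exp (2 * α * t) * ‖u t - p‖ ^ 2 ≤ ‖u 0 - p‖ ^ 2 := by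
      simpa using StronglyMonotoneOp.antitoneOn_exp_mul_norm_sub_sq hstrong hp hulip hu
        self_mem_Ici ht ht
    calc ‖u t - p‖ ^ 2 = Real.exp (-2 * α * t) * (Real.exp (2 * α * t) * ‖u t - p‖ ^ 2) := by
          rw [← mul_assoc, ← Real.exp_add]; simp
      _ ≤ Real.exp (-2 * α * t) * ‖u 0 - p‖ ^ 2 := by gcongr
  have hnorm (t : ℝ) (ht : 0 ≤ t) : ‖u t - p‖ ≤ Real.exp (-(α * t)) * ‖u 0 - p‖ := by
    refine (pow_le_pow_iff_left₀ (norm_nonneg _) (by positivity) two_ne_zero).mp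
      ((hdecay t ht).trans_eq ?_)
    rw [mul_pow, ← Real.exp_nat_mul]
    push_cast
    ring_nf
  refine ⟨hdecay, tendsto_iff_norm_sub_tendsto_zero.mpr ?_⟩
  refine squeeze_zero' (.of_forall fun t ↦ norm_nonneg _)
    ((eventually_ge_atTop 0).mono hnorm) ?_
  simpa using (Real.tendsto_exp_neg_atTop_nhds_zero.comp
    (tendsto_id.const_mul_atTop hα)).mul_const ‖u 0 - p‖

/-- if `A` is maximal monotone and `α`-strongly monotone with `(p, 0) ∈ A`,
then every solution of `u̇ ∈ −Au` satisfies `‖u(t) − p‖² ≤ e^{−2αt}‖u(0) − p‖²`; in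
particular `u(t) → p` strongly as `t → ∞`. -/
theorem stmt19 {H : Type*} [NormedAddCommGroup H] [InnerProductSpace ℝ H] [CompleteSpace H]
    (A : Set (H × H)) (hA : A.Nonempty) (hmax : MaximalMonotone A)
    (α : ℝ) (hα : 0 < α)
    (hstrong : ∀ p ∈ A, ∀ q ∈ A, α * ‖p.1 - q.1‖ ^ 2 ≤ ⟪p.2 - q.2, p.1 - q.1⟫)
    (p : H) (hp : (p, 0) ∈ A)
    (u : ℝ → H) (hulip : LocallyLipschitzOn (Ici 0) u)
    (hu : ∀ᵐ t ∂(volume.restrict (Ioi (0:ℝ))),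
      ∃ d : H, HasDerivAt u d t ∧ (u t, -d) ∈ A) :
    (∀ t : ℝ, 0 ≤ t → ‖u t - p‖ ^ 2 ≤ Real.exp (-2 * α * t) * ‖u 0 - p‖ ^ 2) ∧
    Tendsto u atTop (𝓝 p) :=
  stmt19_general A α hα hstrong p hp u hulip hu
end
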